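/- arXiv:1703.02215 — 3 statements merged into one kernel-verified Lean document; each statement's English description precedes it below -/
import Mathlib

section
/- For every integer n ≥ 1, the polynomial (Ψ′_n(X,Y))² ∈ ℤ[X,A,B] has the form n²·X^{n²−1} + c·X^{n²−3} + (lower order terms), for some c ∈ ℤ[A,B]; i.e. it is monic of degree n²−1 up to the factor n², with vanishing coefficient in degree n²−2. -/
open Polynomial WeierstrassCurve

/-- The generic coefficient ring `ℤ[A, B]`. -/
noncomputable abbrev DivPolyRing : Type := MvPolynomial (Fin 2) ℤ

/-- The generic short Weierstrass curve `y² = x³ + Ax + B` over `ℤ[A, B]`. -/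
noncomputable def genericShortWeierstrass : WeierstrassCurve DivPolyRing :=
  { a₁ := 0, a₂ := 0, a₃ := 0, a₄ := MvPolynomial.X 0, a₆ := MvPolynomial.X 1 }

/-!
Give `X` weight `2` and each `aᵢ` weight `i`, so that `A`, `B` get weights `4`, `6` and every
division polynomial is isobaric, `ΨSqₙ` of weight `2n² - 2`. The coefficient of `X^(n² - 2)`
would then have weight `2`, and `ℤ[A, B]` has nothing of weight `2`. Instead of the full grading
we keep what survives over any ring once `b₂ = 0` (`b₂` is the only `bᵢ` of weight `2`): every
term `c Xᵏ` of a polynomial of weight `w` has coefficient weight `w - 2k ∈ {0} ∪ [4, ∞)`. That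
set is closed under addition, so the property is stable under products.
-/

namespace Polynomial

section Semiring

variable {R : Type*} [Semiring R] {p q : R[X]} {v w : ℤ}

def HasWeightGap (w : ℤ) (p : R[X]) : Prop :=
  ∀ k : ℕ, p.coeff k ≠ 0 → 2 * (k : ℤ) = w ∨ 2 * (k : ℤ) + 4 ≤ w

lemma hasWeightGap_zero (w : ℤ) : HasWeightGap w (0 : R[X]) := by
  simp [HasWeightGap]

lemma hasWeightGap_one : HasWeightGap 0 (1 : R[X]) := by
  intro k hk
  rw [coeff_one] at hk
  grind

lemma hasWeightGap_of_natDegree_le {d : ℕ} (hd : p.natDegree ≤ d + 1) (hc : p.coeff d = 0) :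
    HasWeightGap (2 * d + 2) p := by
  intro k hk
  have : k ≤ d + 1 := le_of_not_gt fun h => hk (coeff_eq_zero_of_natDegree_lt (by omega))
  have : k ≠ d := by rintro rfl; exact hk hc
  omega

lemma HasWeightGap.mul (hp : HasWeightGap v p) (hq : HasWeightGap w q) :
    HasWeightGap (v + w) (p * q) := by
  intro k hk
  rw [coeff_mul] at hk
  obtain ⟨⟨i, j⟩, hij, hne⟩ := Finset.exists_ne_zero_of_sum_ne_zero hk
  rw [Finset.HasAntidiagonal.mem_antidiagonal] at hij
  have := hp i (left_ne_zero_of_mul hne)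
  have := hq j (right_ne_zero_of_mul hne)
  omega

lemma HasWeightGap.pow (hp : HasWeightGap w p) (n : ℕ) : HasWeightGap (n * w) (p ^ n) := by
  induction n with
  | zero => simpa using hasWeightGap_one
  | succ n ih => simpa [pow_succ, add_mul] using ih.mul hp

lemma HasWeightGap.ite (c : Prop) [Decidable c] (hp : HasWeightGap v p) (hq : HasWeightGap w q) :
    HasWeightGap (if c then v else w) (if c then p else q) := by
  split_ifs
  exacts [hp, hq]

end Semiring

lemma HasWeightGap.sub {R : Type*} [Ring R] {p q : R[X]} {w : ℤ} (hp : HasWeightGap w p)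
    (hq : HasWeightGap w q) : HasWeightGap w (p - q) := by
  intro k hk
  rw [coeff_sub] at hk
  by_cases hpk : p.coeff k = 0
  · exact hq k fun h => hk (by rw [hpk, h, sub_zero])
  · exact hp k hpk

end Polynomial

namespace WeierstrassCurve

variable {R : Type*} [CommRing R] (W : WeierstrassCurve R)

lemma hasWeightGap_Ψ₂Sq (hb : W.b₂ = 0) : HasWeightGap 6 W.Ψ₂Sq :=
  hasWeightGap_of_natDegree_le (d := 2) W.natDegree_Ψ₂Sq_le (by simp [Ψ₂Sq, hb, coeff_X_pow])

lemma hasWeightGap_Ψ₃ (hb : W.b₂ = 0) : HasWeightGap 8 W.Ψ₃ :=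
  hasWeightGap_of_natDegree_le (d := 3) W.natDegree_Ψ₃_le (by simp [Ψ₃, hb, mul_assoc, coeff_X_pow])

lemma hasWeightGap_preΨ₄ (hb : W.b₂ = 0) : HasWeightGap 12 W.preΨ₄ :=
  hasWeightGap_of_natDegree_le (d := 5) W.natDegree_preΨ₄_le
    (by simp [preΨ₄, hb, mul_assoc, coeff_X_pow, -map_pow])

def preΨ'Weight (n : ℕ) : ℤ := n ^ 2 - if Even n then 4 else 1

lemma preΨ'Weight_even (m : ℕ) :
    preΨ'Weight (2 * (m + 3)) =
      2 * preΨ'Weight (m + 2) + preΨ'Weight (m + 3) + preΨ'Weight (m + 5) ∧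
    preΨ'Weight (2 * (m + 3)) =
      preΨ'Weight (m + 1) + preΨ'Weight (m + 3) + 2 * preΨ'Weight (m + 4) := by
  by_cases hm : Even m <;> simp [preΨ'Weight, parity_simps, hm] <;> constructor <;> ring

lemma preΨ'Weight_odd (m : ℕ) :
    preΨ'Weight (2 * (m + 2) + 1) =
      preΨ'Weight (m + 4) + 3 * preΨ'Weight (m + 2) + (if Even m then 2 * 6 else 0) ∧
    preΨ'Weight (2 * (m + 2) + 1) =
      preΨ'Weight (m + 1) + 3 * preΨ'Weight (m + 3) + (if Even m then 0 else 2 * 6) := by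
  by_cases hm : Even m <;> simp [preΨ'Weight, parity_simps, hm] <;> constructor <;> ring

lemma hasWeightGap_preΨ' (hb : W.b₂ = 0) (n : ℕ) : HasWeightGap (preΨ'Weight n) (W.preΨ' n) := by
  have hΨ₂Sq := (W.hasWeightGap_Ψ₂Sq hb).pow 2
  induction n using normEDSRec with
  | zero => exact preΨ'_zero W ▸ hasWeightGap_zero _
  | one => exact preΨ'_one W ▸ hasWeightGap_one
  | two => exact preΨ'_two W ▸ hasWeightGap_one
  | three => exact preΨ'_three W ▸ W.hasWeightGap_Ψ₃ hb
  | four => exact preΨ'_four W ▸ W.hasWeightGap_preΨ₄ hb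
  | even m h₁ h₂ h₃ h₄ h₅ =>
    rw [preΨ'_even]
    refine HasWeightGap.sub ?_ ?_
    · rw [(preΨ'Weight_even m).1]
      exact ((h₂.pow 2).mul h₃).mul h₅
    · rw [(preΨ'Weight_even m).2]
      exact (h₁.mul h₃).mul (h₄.pow 2)
  | odd m h₁ h₂ h₃ h₄ =>
    rw [preΨ'_odd]
    refine HasWeightGap.sub ?_ ?_
    · rw [(preΨ'Weight_odd m).1]
      exact (h₄.mul (h₂.pow 3)).mul (hΨ₂Sq.ite _ hasWeightGap_one)
    · rw [(preΨ'Weight_odd m).2]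
      exact (h₁.mul (h₃.pow 3)).mul (hasWeightGap_one.ite _ hΨ₂Sq)

lemma hasWeightGap_ΨSq (hb : W.b₂ = 0) (n : ℤ) : HasWeightGap (2 * n ^ 2 - 2) (W.ΨSq n) := by
  induction n using Int.negInduction with
  | nat n =>
    rw [ΨSq_ofNat]
    convert ((W.hasWeightGap_preΨ' hb n).pow 2).mul
      ((W.hasWeightGap_Ψ₂Sq hb).ite (Even n) hasWeightGap_one) using 1
    by_cases hn : Even n <;> simp [preΨ'Weight, hn] <;> ring
  | neg ih n => simpa [ΨSq_neg] using ih n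

lemma coeff_ΨSq_natAbs_sq_sub_two (hb : W.b₂ = 0) {n : ℤ} (hn : 2 ≤ n.natAbs) :
    (W.ΨSq n).coeff (n.natAbs ^ 2 - 2) = 0 := by
  by_contra h
  have hsq : n ^ 2 = (n.natAbs ^ 2 : ℕ) := by rw [Nat.cast_pow, Int.natCast_natAbs, sq_abs]
  have h4 : 2 ^ 2 ≤ n.natAbs ^ 2 := Nat.pow_le_pow_left hn 2
  have := W.hasWeightGap_ΨSq hb n _ h
  rw [hsq] at this
  omega

end WeierstrassCurve

/-- For every integer `n ≥ 1`, the polynomial `(Ψ′_n(X,Y))² ∈ ℤ[X,A,B]`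
(which is Mathlib's `ΨSq n` for the curve `y² = x³ + Ax + B`) has the form
`n²·X^{n²−1} + c·X^{n²−3} + (lower order terms)` for some `c ∈ ℤ[A,B]`: it has degree `n²−1`,
its leading coefficient is `n²`, and its coefficient in degree `n²−2` vanishes. -/
theorem PsiSq_natDegree_leadingCoeff_subleading (n : ℕ) (hn : 1 ≤ n) :
    (genericShortWeierstrass.ΨSq (n : ℤ)).natDegree = n ^ 2 - 1 ∧
    (genericShortWeierstrass.ΨSq (n : ℤ)).coeff (n ^ 2 - 1) = (n : DivPolyRing) ^ 2 ∧
    (2 ≤ n → (genericShortWeierstrass.ΨSq (n : ℤ)).coeff (n ^ 2 - 2) = 0) := by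
  have hne : ((n : ℤ) : DivPolyRing) ≠ 0 := by exact_mod_cast (by omega : n ≠ 0)
  have hb : genericShortWeierstrass.b₂ = 0 := by simp [b₂, genericShortWeierstrass]
  refine ⟨by simpa using genericShortWeierstrass.natDegree_ΨSq hne, ?_, fun h2 => ?_⟩
  · simpa using genericShortWeierstrass.coeff_ΨSq n
  · simpa using genericShortWeierstrass.coeff_ΨSq_natAbs_sq_sub_two hb (n := n) (by simpa)
end

section
/- For any m ≥ 1, any field K containing A, B, and any λ ∈ K, the polynomial Φ_m(X,λ) := (X−λ)·(Ψ′_m(X,Y))² − Ψ′_{m−1}(X,Y)·Ψ′_{m+1}(X,Y) in K[X] equals X^{m²} − λ·m²·X^{m²−1} + (lower order terms). -/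
/-!
When `b₂ = 0`, each of `Ψ₂Sq`, `Ψ₃` and `preΨ₄` is `c X^d` plus terms of degree `< d - 1`. This
shape is preserved by products (the degrees add) and by differences of polynomials of the same
degree, and the recursions defining `preΨ'` and `Φ` only use these operations, with degrees
matching. Hence the coefficient of `X^(m²-1)` in `Φ_m` vanishes, and in `Φ_m - λ Ψ_m²` it comes
only from `λ Ψ_m²`, whose leading coefficient `m²` sits in degree `m² - 1`.
-/

open Polynomial WeierstrassCurve

namespace Polynomial

/-- `p = C c * X ^ d + q` for some `c` and some `q` of degree less than `d - 1`. -/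
def SubleadingVanishes {R : Type*} [Semiring R] (d : ℕ) (p : R[X]) : Prop :=
  ∀ i, d ≤ i + 1 → i ≠ d → p.coeff i = 0

namespace SubleadingVanishes

section Semiring

variable {R : Type*} [Semiring R] {a b d : ℕ} {p q : R[X]}

lemma zero (d : ℕ) : SubleadingVanishes d (0 : R[X]) :=
  fun _ _ _ ↦ coeff_zero _

lemma one : SubleadingVanishes 0 (1 : R[X]) :=
  fun _ _ hi ↦ by rw [coeff_one, if_neg hi]

lemma X : SubleadingVanishes 1 (X : R[X]) :=
  fun _ _ hi ↦ coeff_X_of_ne_one hi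

lemma mul (hp : SubleadingVanishes a p) (hq : SubleadingVanishes b q) :
    SubleadingVanishes (a + b) (p * q) := by
  intro k hk hk'
  rw [coeff_mul]
  refine Finset.sum_eq_zero fun ⟨i, j⟩ hij ↦ ?_
  rw [Finset.HasAntidiagonal.mem_antidiagonal] at hij
  by_cases hi : a ≤ i + 1 ∧ i ≠ a
  · rw [hp i hi.1 hi.2, zero_mul]
  by_cases hj : b ≤ j + 1 ∧ j ≠ b
  · rw [hq j hj.1 hj.2, mul_zero]
  omega

lemma pow (hp : SubleadingVanishes a p) (k : ℕ) : SubleadingVanishes (k * a) (p ^ k) := by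
  induction k with
  | zero => simpa using one
  | succ k ih => simpa [pow_succ, Nat.succ_mul] using ih.mul hp

lemma ite (c : Prop) [Decidable c] (hp : SubleadingVanishes a p) (hq : SubleadingVanishes b q) :
    SubleadingVanishes (if c then a else b) (if c then p else q) := by
  split_ifs <;> assumption

lemma coeff_sub_one (h : SubleadingVanishes d p) (hd : d ≠ 0) : p.coeff (d - 1) = 0 :=
  h _ (by omega) (by omega)

end Semiring

lemma sub {R : Type*} [Ring R] {d : ℕ} {p q : R[X]} (hp : SubleadingVanishes d p)
    (hq : SubleadingVanishes d q) : SubleadingVanishes d (p - q) := fun i hi hi' ↦ by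
  rw [coeff_sub, hp i hi hi', hq i hi hi', sub_zero]

end SubleadingVanishes

end Polynomial

namespace WeierstrassCurve

/-- The degree bound of `WeierstrassCurve.natDegree_preΨ'_le`. -/
def preΨ'Degree (n : ℕ) : ℕ := (n ^ 2 - if Even n then 4 else 1) / 2

lemma two_mul_preΨ'Degree_add {n : ℕ} (hn : n ≠ 0) :
    2 * preΨ'Degree n + (if Even n then 4 else 1) = n ^ 2 := by
  rcases n.even_or_odd' with ⟨k, rfl | rfl⟩
  · have hsq : (2 * k) ^ 2 = 4 * k ^ 2 := by ring
    have hk : 1 ≤ k ^ 2 := Nat.one_le_pow _ _ (by omega)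
    simp only [preΨ'Degree, even_two_mul, if_true]
    omega
  · have hsq : (2 * k + 1) ^ 2 = 4 * k ^ 2 + 4 * k + 1 := by ring
    simp only [preΨ'Degree, Nat.not_even_two_mul_add_one, if_false]
    omega

-- The two terms of `preΨ'_even`, `preΨ'_odd` and `Φ_ofNat` have the expected degree.
lemma preΨ'Degree_even (m : ℕ) :
    2 * preΨ'Degree (m + 2) + preΨ'Degree (m + 3) + preΨ'Degree (m + 5) =
      preΨ'Degree (2 * (m + 3)) ∧
    preΨ'Degree (m + 1) + preΨ'Degree (m + 3) + 2 * preΨ'Degree (m + 4) =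
      preΨ'Degree (2 * (m + 3)) := by
  have h1 := two_mul_preΨ'Degree_add (n := m + 1) (by omega)
  have h2 := two_mul_preΨ'Degree_add (n := m + 2) (by omega)
  have h3 := two_mul_preΨ'Degree_add (n := m + 3) (by omega)
  have h4 := two_mul_preΨ'Degree_add (n := m + 4) (by omega)
  have h5 := two_mul_preΨ'Degree_add (n := m + 5) (by omega)
  have h6 := two_mul_preΨ'Degree_add (n := 2 * (m + 3)) (by omega)
  simp only [Nat.even_add_one, even_two_mul, if_true] at h1 h2 h3 h4 h5 h6
  constructor <;> split_ifs at * <;> first | tauto | linarith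

lemma preΨ'Degree_odd (m : ℕ) :
    preΨ'Degree (m + 4) + 3 * preΨ'Degree (m + 2) + (if Even m then 2 * 3 else 0) =
      preΨ'Degree (2 * (m + 2) + 1) ∧
    preΨ'Degree (m + 1) + 3 * preΨ'Degree (m + 3) + (if Even m then 0 else 2 * 3) =
      preΨ'Degree (2 * (m + 2) + 1) := by
  have h1 := two_mul_preΨ'Degree_add (n := m + 1) (by omega)
  have h2 := two_mul_preΨ'Degree_add (n := m + 2) (by omega)
  have h3 := two_mul_preΨ'Degree_add (n := m + 3) (by omega)
  have h4 := two_mul_preΨ'Degree_add (n := m + 4) (by omega)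
  have h5 := two_mul_preΨ'Degree_add (n := 2 * (m + 2) + 1) (by omega)
  simp only [Nat.even_add_one, even_two_mul, not_true_eq_false, if_false] at h1 h2 h3 h4 h5
  constructor <;> split_ifs at * <;> first | tauto | linarith

lemma preΨ'Degree_Φ_ofNat {n : ℕ} (hn : n ≠ 0) :
    1 + 2 * preΨ'Degree (n + 1) + (if Even n then 0 else 3) = (n + 1) ^ 2 ∧
    preΨ'Degree (n + 2) + preΨ'Degree n + (if Even n then 3 else 0) = (n + 1) ^ 2 := by
  have h0 := two_mul_preΨ'Degree_add hn
  have h1 := two_mul_preΨ'Degree_add (n := n + 1) (by omega)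
  have h2 := two_mul_preΨ'Degree_add (n := n + 2) (by omega)
  simp only [Nat.even_add_one] at h1 h2
  constructor <;> split_ifs at * <;> first | tauto | linarith

variable {R : Type*} [CommRing R] (W : WeierstrassCurve R)

lemma subleadingVanishes_Ψ₂Sq (hb₂ : W.b₂ = 0) : SubleadingVanishes 3 W.Ψ₂Sq := by
  intro i hi hi'
  simp only [Ψ₂Sq, hb₂, map_zero, zero_mul, add_zero, map_mul, mul_assoc, coeff_add, coeff_C_mul,
    coeff_X_pow, mul_ite, mul_one, mul_zero, coeff_X, coeff_C]
  split_ifs <;> first | omega | simp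

lemma subleadingVanishes_Ψ₃ (hb₂ : W.b₂ = 0) : SubleadingVanishes 4 W.Ψ₃ := by
  intro i hi hi'
  simp only [Ψ₃, hb₂, map_zero, zero_mul, add_zero, mul_assoc, coeff_add, coeff_ofNat_mul,
    coeff_X_pow, mul_ite, mul_one, mul_zero, coeff_C_mul, coeff_X, coeff_C]
  split_ifs <;> first | omega | simp

lemma subleadingVanishes_preΨ₄ (hb₂ : W.b₂ = 0) : SubleadingVanishes 6 W.preΨ₄ := by
  intro i hi hi'
  simp only [preΨ₄, hb₂, map_zero, zero_mul, add_zero, mul_assoc, zero_sub, map_neg, neg_mul,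
    coeff_add, coeff_ofNat_mul, coeff_X_pow, mul_ite, mul_one, mul_zero, coeff_C_mul, coeff_neg,
    coeff_X, coeff_C]
  split_ifs <;> first | omega | simp

lemma subleadingVanishes_preΨ' (hb₂ : W.b₂ = 0) (n : ℕ) :
    SubleadingVanishes (preΨ'Degree n) (W.preΨ' n) := by
  induction n using normEDSRec with
  | zero => simpa using SubleadingVanishes.zero _
  | one => rw [preΨ'_one]; exact .one
  | two => rw [preΨ'_two]; exact .one
  | three => rw [preΨ'_three]; exact W.subleadingVanishes_Ψ₃ hb₂
  | four => rw [preΨ'_four]; exact W.subleadingVanishes_preΨ₄ hb₂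
  | even m h₁ h₂ h₃ h₄ h₅ =>
    obtain ⟨hd, hd'⟩ := preΨ'Degree_even m
    rw [preΨ'_even]
    exact .sub (hd ▸ ((h₂.pow 2).mul h₃).mul h₅) (hd' ▸ (h₁.mul h₃).mul (h₄.pow 2))
  | odd m h₁ h₂ h₃ h₄ =>
    obtain ⟨hd, hd'⟩ := preΨ'Degree_odd m
    have hΨ₂Sq := (W.subleadingVanishes_Ψ₂Sq hb₂).pow 2
    rw [preΨ'_odd]
    exact .sub (hd ▸ (h₄.mul (h₂.pow 3)).mul (.ite _ hΨ₂Sq .one))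
      (hd' ▸ (h₁.mul (h₃.pow 3)).mul (.ite _ .one hΨ₂Sq))

lemma subleadingVanishes_Φ (hb₂ : W.b₂ = 0) {n : ℕ} (hn : n ≠ 0) :
    SubleadingVanishes (n ^ 2) (W.Φ n) := by
  obtain ⟨n, rfl⟩ := Nat.exists_eq_add_one_of_ne_zero hn
  rcases eq_or_ne n 0 with rfl | hn
  · simpa using SubleadingVanishes.X
  obtain ⟨hd, hd'⟩ := preΨ'Degree_Φ_ofNat hn
  have hΨ₂Sq := W.subleadingVanishes_Ψ₂Sq hb₂
  have hpreΨ' := W.subleadingVanishes_preΨ' hb₂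
  rw [Nat.cast_add_one, Φ_ofNat]
  exact .sub (hd ▸ (SubleadingVanishes.X.mul ((hpreΨ' _).pow 2)).mul (.ite _ .one hΨ₂Sq))
    (hd' ▸ ((hpreΨ' _).mul (hpreΨ' _)).mul (.ite _ hΨ₂Sq .one))

end WeierstrassCurve

theorem Phi_lambda_monic_subleading_general
    {K : Type*} [Field K] (W : WeierstrassCurve K)
    (ha₁ : W.a₁ = 0) (ha₂ : W.a₂ = 0)
    (lam : K) (m : ℕ) (hm : 1 ≤ m) :
    (WeierstrassCurve.Φ W (m : ℤ) - C lam * W.ΨSq (m : ℤ)).natDegree = m ^ 2 ∧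
    (WeierstrassCurve.Φ W (m : ℤ) - C lam * W.ΨSq (m : ℤ)).coeff (m ^ 2) = 1 ∧
    (WeierstrassCurve.Φ W (m : ℤ) - C lam * W.ΨSq (m : ℤ)).coeff (m ^ 2 - 1) =
      -(lam * (m : K) ^ 2) := by
  have hb₂ : W.b₂ = 0 := by rw [b₂, ha₁, ha₂]; ring
  have hΦ_natDegree : (W.Φ m).natDegree = m ^ 2 := by
    rw [W.natDegree_Φ, Int.natAbs_natCast]
  have hΦ_coeff : (W.Φ m).coeff (m ^ 2) = 1 := by
    simpa only [Int.natAbs_natCast] using W.coeff_Φ m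
  have hΦ_subleading : (W.Φ m).coeff (m ^ 2 - 1) = 0 :=
    (W.subleadingVanishes_Φ hb₂ (by omega)).coeff_sub_one (by positivity)
  have hΨSq_natDegree : (W.ΨSq m).natDegree < m ^ 2 := by
    have := W.natDegree_ΨSq_le m
    rw [Int.natAbs_natCast] at this
    have := Nat.one_le_pow 2 m hm
    omega
  have hΨSq_coeff : (W.ΨSq m).coeff (m ^ 2 - 1) = (m : K) ^ 2 := by
    simpa only [Int.natAbs_natCast, Int.cast_pow, Int.cast_natCast] using W.coeff_ΨSq m
  refine ⟨?_, ?_, ?_⟩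
  · rw [natDegree_sub_eq_left_of_natDegree_lt, hΦ_natDegree]
    exact (natDegree_C_mul_le _ _).trans_lt (hΦ_natDegree ▸ hΨSq_natDegree)
  · rw [coeff_sub, coeff_C_mul, coeff_eq_zero_of_natDegree_lt hΨSq_natDegree, hΦ_coeff, mul_zero,
      sub_zero]
  · rw [coeff_sub, coeff_C_mul, hΦ_subleading, hΨSq_coeff, zero_sub]

/-- For any `m ≥ 1`, any field `K` containing `A`, `B` (that is, any short
Weierstrass curve `y² = x³ + Ax + B` over `K`, i.e. with `a₁ = a₂ = a₃ = 0`), and any `λ ∈ K`,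
the polynomial `Φ_m(X,λ) := (X−λ)·(Ψ′_m(X,Y))² − Ψ′_{m−1}(X,Y)·Ψ′_{m+1}(X,Y)` in `K[X]`
(which equals `W.Φ m − C λ · W.ΨSq m` in Mathlib's notation) equals
`X^{m²} − λ·m²·X^{m²−1} + (lower order terms)`: it is monic of degree `m²` and its coefficient
in degree `m² − 1` is `−λ·m²`. -/
theorem Phi_lambda_monic_subleading
    {K : Type*} [Field K] (W : WeierstrassCurve K)
    (ha₁ : W.a₁ = 0) (ha₂ : W.a₂ = 0) (ha₃ : W.a₃ = 0)
    (lam : K) (m : ℕ) (hm : 1 ≤ m) :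
    (WeierstrassCurve.Φ W (m : ℤ) - C lam * W.ΨSq (m : ℤ)).natDegree = m ^ 2 ∧
    (WeierstrassCurve.Φ W (m : ℤ) - C lam * W.ΨSq (m : ℤ)).coeff (m ^ 2) = 1 ∧
    (WeierstrassCurve.Φ W (m : ℤ) - C lam * W.ΨSq (m : ℤ)).coeff (m ^ 2 - 1) =
      -(lam * (m : K) ^ 2) :=
  Phi_lambda_monic_subleading_general W ha₁ ha₂ lam m hm
end

section
/- Let G be a finite group, M a G-module, and β a central element of G such that β − 1 acts invertibly (as an automorphism) on M. Then H¹(G, M) = 0. -/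
/-- **Sah's lemma.** Let `G` be a finite group, `M` a `G`-module, and `β` a central
element of `G` such that `β − 1` acts invertibly (as an automorphism) on `M`. Then `H¹(G, M) = 0`,
expressed at the level of 1-cocycles: every 1-cocycle is a 1-coboundary. -/
theorem sah_lemma_H1_eq_zero
    (G : Type*) [Group G] [Finite G] (M : Type*) [AddCommGroup M] [DistribMulAction G M]
    (β : G) (hβ : β ∈ Subgroup.center G)
    (hβ1 : Function.Bijective (fun m : M => β • m - m))
    (f : G → M) (hf : ∀ g h : G, f (g * h) = f g + g • f h) :
    ∃ m : M, ∀ g : G, f g = g • m - m := by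
  obtain ⟨m₀, hm₀⟩ := hβ1.2 (f β)
  simp only at hm₀
  refine ⟨m₀, fun g => ?_⟩
  have hcomm : β * g = g * β := (Subgroup.mem_center_iff.mp hβ g).symm
  have key : f β + β • f g = f g + g • f β := by
    rw [← hf, ← hf, hcomm]
  apply hβ1.1
  simp only [smul_sub]
  have h3 : β • f g - f g = g • f β - f β :=
    sub_eq_sub_iff_add_eq_add.mpr (by rw [add_comm, add_comm (g • f β)]; exact key)
  rw [h3, ← hm₀, ← mul_smul, hcomm, mul_smul, smul_sub]
  abel
end
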